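/- arXiv:1208.3882 — 3 statements merged into one kernel-verified Lean document; each statement's English description precedes it below -/
import Mathlib

section
/- Let Σ = {σ, ω} be a two-letter alphabet and for a language L ⊆ Σ* let L^⊙0 = {ε} and L^⊙(n+1) = L^⊙n ⧢ L, and let the iterated shuffle be L^⊗ = ⋃ₙ L^⊙n. Then the iterated shuffle of the single-word language {σω} is exactly the set of balanced words: {σω}^⊗ = { w ∈ Σ* : every prefix of w contains at least as many occurrences of σ as of ω, and w contains equally many occurrences of σ and ω }. -/
/-- The two-letter alphabet `Σ = {σ, ω}`. -/
inductive TwoSym : Type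
  | sig : TwoSym  -- the increment (signal) symbol σ
  | om : TwoSym
  deriving DecidableEq

/-- `Interleave u v w` means that `w` is an interleaving (shuffle) of the words `u` and `v`. -/
inductive Interleave {α : Type*} : List α → List α → List α → Prop
  | nil : Interleave [] [] []
  | left {a : α} {u v w : List α} : Interleave u v w → Interleave (a :: u) v (a :: w)
  | right {a : α} {u v w : List α} : Interleave u v w → Interleave u (a :: v) (a :: w)

/-- The shuffle product of two languages. -/
def Language.shuffle {α : Type*} (L₁ L₂ : Language α) : Language α :=
  { w | ∃ u ∈ L₁, ∃ v ∈ L₂, Interleave u v w }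

/-- The `n`-th shuffle power: `L^⊙0 = {ε}`, `L^⊙(n+1) = L^⊙n ⧢ L`. -/
def Language.shufflePow {α : Type*} (L : Language α) : ℕ → Language α
  | 0 => 1
  | n + 1 => (L.shufflePow n).shuffle L

/-- The iterated shuffle (shuffle closure) `L^⊗ = ⋃ₙ L^⊙n`. -/
def Language.iterShuffle {α : Type*} (L : Language α) : Language α :=
  ⋃ n, L.shufflePow n

/-! Balanced words are closed under interleaving: a prefix of an interleaving of `u` and `v` is
an interleaving of prefixes of `u` and `v`, and letter counts add up. Since `σω` is balanced, so
is every shuffle power of `{σω}`. Conversely, a nonempty balanced word starts with `σ`; cancelling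
this `σ` against the first `ω` leaves a balanced word `x ++ y`, and the original word `σ x ω y` is
an interleaving of `x ++ y` with `σω`, so induction on the number of `σ`s concludes. -/

open List

namespace Interleave

variable {α : Type*}

theorem perm {u v w : List α} (h : Interleave u v w) : w ~ u ++ v := by
  induction h with
  | nil => rfl
  | left _ ih => exact ih.cons _
  | right _ ih => exact (ih.cons _).trans perm_middle.symm

theorem count_eq [DecidableEq α] {u v w : List α} (h : Interleave u v w) (c : α) :
    w.count c = u.count c + v.count c := by
  rw [h.perm.count_eq, count_append]

theorem exists_of_isPrefix {u v w p : List α} (h : Interleave u v w) (hp : p <+: w) :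
    ∃ q r, q <+: u ∧ r <+: v ∧ Interleave q r p := by
  induction h generalizing p with
  | nil => exact ⟨[], [], nil_prefix, nil_prefix, prefix_nil.mp hp ▸ .nil⟩
  | left _ ih =>
    rcases prefix_cons_iff.mp hp with rfl | ⟨p, rfl, hp'⟩
    · exact ⟨[], [], nil_prefix, nil_prefix, .nil⟩
    · obtain ⟨q, r, hq, hr, hi⟩ := ih hp'
      exact ⟨_ :: q, r, cons_prefix_cons.mpr ⟨rfl, hq⟩, hr, .left hi⟩
  | right _ ih =>
    rcases prefix_cons_iff.mp hp with rfl | ⟨p, rfl, hp'⟩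
    · exact ⟨[], [], nil_prefix, nil_prefix, .nil⟩
    · obtain ⟨q, r, hq, hr, hi⟩ := ih hp'
      exact ⟨q, _ :: r, hq, cons_prefix_cons.mpr ⟨rfl, hr⟩, .right hi⟩

theorem nil_right : ∀ l : List α, Interleave l [] l
  | [] => .nil
  | _ :: l => .left (nil_right l)

theorem append_singleton (x y : List α) (c : α) : Interleave (x ++ y) [c] (x ++ c :: y) := by
  induction x with
  | nil => exact .right (nil_right y)
  | cons _ _ ih => exact .left ih

end Interleave

section Balanced

variable {α : Type*} [DecidableEq α] {a b : α}

def IsBalanced (a b : α) (w : List α) : Prop :=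
  (∀ p, p <+: w → p.count b ≤ p.count a) ∧ w.count a = w.count b

theorem isBalanced_nil : IsBalanced a b [] :=
  ⟨fun _ hp => prefix_nil.mp hp ▸ le_rfl, rfl⟩

theorem isBalanced_pair : IsBalanced a b [a, b] := by
  rcases eq_or_ne a b with rfl | hab
  · exact ⟨fun _ _ => le_rfl, rfl⟩
  refine ⟨fun p hp => ?_, by simp [hab, hab.symm]⟩
  rcases prefix_cons_iff.mp hp with rfl | ⟨p, rfl, hp'⟩
  · rfl
  rcases prefix_cons_iff.mp hp' with rfl | ⟨p, rfl, hp''⟩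
  · simp [hab]
  · simp [prefix_nil.mp hp'', hab, hab.symm]

theorem IsBalanced.interleave {u v w : List α} (hu : IsBalanced a b u) (hv : IsBalanced a b v)
    (h : Interleave u v w) : IsBalanced a b w := by
  refine ⟨fun p hp => ?_, by rw [h.count_eq, h.count_eq, hu.2, hv.2]⟩
  obtain ⟨q, r, hq, hr, hi⟩ := h.exists_of_isPrefix hp
  rw [hi.count_eq, hi.count_eq]
  exact add_le_add (hu.1 q hq) (hv.1 r hr)

theorem isBalanced_of_mem_shufflePow {w : List α} :
    ∀ {n}, w ∈ Language.shufflePow {[a, b]} n → IsBalanced a b w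
  | 0, hw => (Language.mem_one w).mp hw ▸ isBalanced_nil
  | _ + 1, ⟨_, hu, _, rfl, h⟩ => (isBalanced_of_mem_shufflePow hu).interleave isBalanced_pair h

theorem IsBalanced.of_cons_append_cons (hab : a ≠ b) {x y : List α} (hx : b ∉ x)
    (h : IsBalanced a b (a :: (x ++ b :: y))) : IsBalanced a b (x ++ y) := by
  have hxb : x.count b = 0 := count_eq_zero.mpr hx
  refine ⟨fun q hq => ?_, ?_⟩
  · rcases prefix_or_prefix_of_prefix hq (prefix_append x y) with hqx | ⟨p, rfl⟩
    · have := hqx.sublist.count_le b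
      omega
    · have := h.1 (a :: (x ++ b :: p)) (by simpa using hq)
      simp only [count_append, count_cons_self, count_cons_of_ne hab,
        count_cons_of_ne hab.symm] at this ⊢
      omega
  · have := h.2
    simp only [count_append, count_cons_self, count_cons_of_ne hab,
      count_cons_of_ne hab.symm] at this ⊢
    omega

end Balanced

theorem IsBalanced.exists_eq_sig_cons {w : List TwoSym} (h : IsBalanced .sig .om w)
    (hw : w ≠ []) : ∃ x y, w = .sig :: (x ++ .om :: y) ∧ IsBalanced .sig .om (x ++ y) := by
  obtain ⟨c, t, rfl⟩ := exists_cons_of_ne_nil hw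
  obtain rfl : c = .sig := by
    have := h.1 [c] (cons_prefix_cons.mpr ⟨rfl, nil_prefix⟩)
    cases c <;> simp_all
  have hom : TwoSym.om ∈ t := by
    have := h.2
    rw [count_cons_self, count_cons_of_ne (by decide)] at this
    exact count_pos_iff.mp (by omega)
  obtain ⟨x, y, rfl, hx⟩ := eq_append_cons_of_mem hom
  exact ⟨x, y, rfl, h.of_cons_append_cons (by decide) hx⟩

theorem IsBalanced.mem_shufflePow {w : List TwoSym} (h : IsBalanced .sig .om w) :
    w ∈ Language.shufflePow {[.sig, .om]} (w.count .sig) := by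
  rcases eq_or_ne w [] with rfl | hw
  · rfl
  obtain ⟨x, y, hwxy, hxy⟩ := h.exists_eq_sig_cons hw
  have hcount : w.count .sig = (x ++ y).count .sig + 1 := by simp [hwxy]
  rw [hcount, hwxy]
  exact ⟨x ++ y, hxy.mem_shufflePow, _, rfl, .right (.append_singleton x y .om)⟩
termination_by w.length
decreasing_by simp [hwxy]

/-- The iterated shuffle of the single-word language `{σω}` is exactly the set of
balanced words over `{σ, ω}`. -/
theorem iterShuffle_sig_om_eq_balanced :
    Language.iterShuffle ({[TwoSym.sig, TwoSym.om]} : Language TwoSym) =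
      { w : List TwoSym |
        (∀ p, p <+: w → p.count TwoSym.om ≤ p.count TwoSym.sig) ∧
        w.count TwoSym.sig = w.count TwoSym.om } := by
  refine (Set.iUnion_subset fun _ _ => isBalanced_of_mem_shufflePow).antisymm fun w hw => ?_
  exact Set.mem_iUnion.mpr ⟨_, IsBalanced.mem_shufflePow hw⟩
end

section
/- For every labelled place/transition Petri net Π = (P, T, pre, post, M₀, ρ) over an alphabet Σ, there exist a labelled place/transition Petri net Π′ over Σ with initial marking M₀′ and a final marking M_f′ such that the terminal language T(Π′, M₀′, M_f′) equals the Petri net language L(Π, M₀). In other words, the class ℓ_λ⁰ of Petri net languages is contained in the class ℓ_λ¹ of terminal Petri net languages. -/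
/-- A labelled place/transition Petri net with places `P`, transitions `T`, and labels in
`A ∪ {λ}` (modelled by `Option A`, with `none` the silent label λ). -/
structure LabelledPetriNet (P T A : Type) where
  pre : T → P → ℕ
  post : T → P → ℕ
  label : T → Option A

namespace LabelledPetriNet

variable {P T A : Type}

/-- A transition `t` is enabled at marking `M` if every place holds enough marks. -/
def Enabled (N : LabelledPetriNet P T A) (M : P → ℕ) (t : T) : Prop :=
  ∀ p, N.pre t p ≤ M p

/-- Firing a transition `t` at marking `M`. -/
def fire (N : LabelledPetriNet P T A) (M : P → ℕ) (t : T) : P → ℕ :=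
  fun p => M p - N.pre t p + N.post t p

/-- `N.FiringSeq M s M'` : the sequence of transitions `s` can be successively fired from the
marking `M`, leading to the marking `M'`. -/
inductive FiringSeq (N : LabelledPetriNet P T A) : (P → ℕ) → List T → (P → ℕ) → Prop
  | nil (M : P → ℕ) : FiringSeq N M [] M
  | cons {M M' : P → ℕ} {t : T} {ts : List T} :
      N.Enabled M t → FiringSeq N (N.fire M t) ts M' → FiringSeq N M (t :: ts) M'

/-- The label word of a firing sequence: the labels of its transitions with the silent
labels deleted. -/
def labelWord (N : LabelledPetriNet P T A) (s : List T) : List A :=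
  s.filterMap N.label

/-- The Petri net language `L(Π, M₀)`: label words of all firing sequences from `M₀`. -/
def lang (N : LabelledPetriNet P T A) (M₀ : P → ℕ) : Language A :=
  { w | ∃ s M, N.FiringSeq M₀ s M ∧ N.labelWord s = w }

/-- The terminal Petri net language `T(Π, M₀, M_f)`: label words of all firing sequences
leading from `M₀` exactly to `M_f`. -/
def terminalLang (N : LabelledPetriNet P T A) (M₀ Mf : P → ℕ) : Language A :=
  { w | ∃ s, N.FiringSeq M₀ s Mf ∧ N.labelWord s = w }

end LabelledPetriNet


section Aux

open LabelledPetriNet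

variable {P T A : Type} [DecidableEq P]

/-- The augmented net: original transitions plus one silent "dump" transition per place. -/
noncomputable def augNet (N : LabelledPetriNet P T A) : LabelledPetriNet P (T ⊕ P) A where
  pre t := match t with
    | Sum.inl t => N.pre t
    | Sum.inr p => fun q => if q = p then 1 else 0
  post t := match t with
    | Sum.inl t => N.post t
    | Sum.inr _ => fun _ => 0
  label t := match t with
    | Sum.inl t => N.label t
    | Sum.inr _ => none

lemma firingSeq_append (N : LabelledPetriNet P T A) {M M' M'' : P → ℕ} {s s' : List T}
    (h : N.FiringSeq M s M') (h' : N.FiringSeq M' s' M'') : N.FiringSeq M (s ++ s') M'' := by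
  induction h with
  | nil _ => exact h'
  | cons he _ ih => exact FiringSeq.cons he (ih h')

lemma aug_lift (N : LabelledPetriNet P T A) {M M' : P → ℕ} {s : List T}
    (h : N.FiringSeq M s M') : (augNet N).FiringSeq M (s.map Sum.inl) M' := by
  induction h with
  | nil M => exact FiringSeq.nil M
  | cons he _ ih => exact FiringSeq.cons he ih

lemma aug_dump [Fintype P] (N : LabelledPetriNet P T A) :
    ∀ (n : ℕ) (M : P → ℕ), (∑ p, M p) = n →
      ∃ s : List (T ⊕ P), (augNet N).FiringSeq M s (fun _ => 0) ∧
        (augNet N).labelWord s = [] := by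
  intro n
  induction n with
  | zero =>
    intro M hM
    have : M = fun _ => 0 := by
      funext p
      exact (Finset.sum_eq_zero_iff.mp hM) p (Finset.mem_univ p)
    exact ⟨[], this ▸ FiringSeq.nil M, rfl⟩
  | succ n ih =>
    intro M hM
    have hex : ∃ p, M p ≠ 0 := by
      by_contra h
      push_neg at h
      simp [h] at hM
    obtain ⟨p, hp⟩ := hex
    have hen : (augNet N).Enabled M (Sum.inr p) := by
      intro q
      simp only [augNet]
      split
      · rename_i h; subst h; omega
      · omega
    have hfire : (augNet N).fire M (Sum.inr p) = Function.update M p (M p - 1) := by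
      funext q
      simp only [LabelledPetriNet.fire, augNet, Function.update]
      split
      · rename_i h; subst h; simp
      · rename_i h; simp [h]
    have hsum : (∑ q, Function.update M p (M p - 1) q) = n := by
      classical
      rw [Finset.sum_update_of_mem (Finset.mem_univ p)]
      have := Finset.add_sum_erase Finset.univ M (Finset.mem_univ p)
      rw [Finset.erase_eq] at this
      omega
    obtain ⟨s, hs, hw⟩ := ih (Function.update M p (M p - 1)) hsum
    refine ⟨Sum.inr p :: s, FiringSeq.cons hen (hfire ▸ hs), ?_⟩
    simpa [LabelledPetriNet.labelWord, augNet] using hw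

lemma aug_project (N : LabelledPetriNet P T A) {M M' : P → ℕ} {s : List (T ⊕ P)}
    (h : (augNet N).FiringSeq M s M') :
    ∀ M₂ : P → ℕ, (∀ p, M p ≤ M₂ p) →
      ∃ (s' : List T) (M₂' : P → ℕ), N.FiringSeq M₂ s' M₂' ∧
        N.labelWord s' = (augNet N).labelWord s := by
  induction h with
  | nil M => exact fun M₂ _ => ⟨[], M₂, FiringSeq.nil M₂, rfl⟩
  | @cons M M' t ts he _ ih =>
    intro M₂ hle
    cases t with
    | inl t =>
      have he2 : N.Enabled M₂ t := fun p => le_trans (he p) (hle p)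
      have hle' : ∀ p, (augNet N).fire M (Sum.inl t) p ≤ N.fire M₂ t p := by
        intro p
        simp only [LabelledPetriNet.fire, augNet]
        have := hle p
        omega
      obtain ⟨s', M₂', hs', hw⟩ := ih (N.fire M₂ t) hle'
      refine ⟨t :: s', M₂', FiringSeq.cons he2 hs', ?_⟩
      simp only [LabelledPetriNet.labelWord, List.filterMap_cons] at *
      have : (augNet N).label (Sum.inl t) = N.label t := rfl
      rw [this]
      cases N.label t <;> simp [hw]
    | inr p =>
      have hle' : ∀ q, (augNet N).fire M (Sum.inr p) q ≤ M₂ q := by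
        intro q
        simp only [LabelledPetriNet.fire, augNet]
        have := hle q
        split <;> omega
      obtain ⟨s', M₂', hs', hw⟩ := ih M₂ hle'
      refine ⟨s', M₂', hs', ?_⟩
      simp only [LabelledPetriNet.labelWord, List.filterMap_cons] at *
      have : (augNet N).label (Sum.inr p) = none := rfl
      rw [this]
      simpa using hw

end Aux

/-- Every Petri net language is a terminal Petri net language: for each labelled Petri net `Π`
with initial marking `M₀` there is a labelled Petri net `Π′` with initial marking `M₀′` and
final marking `M_f′` whose terminal language equals `L(Π, M₀)`.  Hence `ℓ_λ⁰ ⊆ ℓ_λ¹`. -/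
theorem petriLang_subset_terminalLang {P T A : Type} [Fintype P] [Fintype T]
    (N : LabelledPetriNet P T A) (M₀ : P → ℕ) :
    ∃ (P' T' : Type) (_ : Fintype P') (_ : Fintype T') (N' : LabelledPetriNet P' T' A)
      (M₀' Mf' : P' → ℕ), N'.terminalLang M₀' Mf' = N.lang M₀ := by
  classical
  refine ⟨P, T ⊕ P, inferInstance, inferInstance, augNet N, M₀, fun _ => 0, ?_⟩
  ext w
  constructor
  · rintro ⟨s, hs, rfl⟩
    obtain ⟨s', M₂', hs', hw⟩ := aug_project N hs M₀ (fun _ => le_refl _)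
    exact ⟨s', M₂', hs', hw⟩
  · rintro ⟨s, M, hs, rfl⟩
    obtain ⟨s₂, hs₂, hw₂⟩ := aug_dump N (∑ p, M p) M rfl
    refine ⟨s.map Sum.inl ++ s₂, firingSeq_append _ (aug_lift N hs) hs₂, ?_⟩
    simp only [LabelledPetriNet.labelWord, List.filterMap_append, List.filterMap_map]
    rw [show List.filterMap ((augNet N).label ∘ Sum.inl) s = N.labelWord s from rfl]
    simpa [LabelledPetriNet.labelWord] using hw₂
end

section
/- Let Σ be a finite alphabet, n ∈ ℕ, and Ω_n = {σ₁,…,σₙ, ω₁,…,ωₙ} a set of 2n synchronization symbols disjoint from Σ. Let C₀(n) ⊆ Ω_n* be the [0]-counter semaphore language: the set of words v over Ω_n such that, for every i ≤ n, every prefix of v contains at least as many occurrences of σᵢ as of ωᵢ, and v contains equally many occurrences of σᵢ and ωᵢ. For any regular expression E over the alphabet Σ ∪ Ω_n, the language L_SCE(E) = { h(x) : x ∈ L(E) and h̄(x) ∈ C₀(n) } — where h erases all Ω_n-symbols from a word and h̄ erases all Σ-symbols — is a terminal Petri net language over Σ, i.e., there exist a labelled place/transition Petri net Π over Σ, an initial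 marking M₀, and a final marking M_f with T(Π, M₀, M_f) = L_SCE(E). -/
/-- The synchronization alphabet `Ω_n = {σ₁,…,σₙ, ω₁,…,ωₙ}`: the pair `(i, true)` is the
increment symbol `σᵢ` and `(i, false)` is the decrement symbol `ωᵢ`. -/
abbrev Omega (n : ℕ) : Type := Fin n × Bool

/-- The `[0]`-counter semaphore language `C₀(n)`: words over `Ω_n` such that for every `i`,
every prefix contains at least as many `σᵢ`'s as `ωᵢ`'s, and the totals are equal. -/
def C0 (n : ℕ) : Language (Omega n) :=
  { v | ∀ i : Fin n,
      (∀ p, p <+: v → p.count (i, false) ≤ p.count (i, true)) ∧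
      v.count (i, true) = v.count (i, false) }

/-- The homomorphism `h` erasing all `Ω_n`-symbols of a word over `Σ ∪ Ω_n`. -/
def eraseOmega {A : Type} {n : ℕ} (x : List (A ⊕ Omega n)) : List A :=
  x.filterMap Sum.getLeft?

/-- The homomorphism `h̄` erasing all `Σ`-symbols of a word over `Σ ∪ Ω_n`. -/
def eraseSigma {A : Type} {n : ℕ} (x : List (A ⊕ Omega n)) : List (Omega n) :=
  x.filterMap Sum.getRight?

/-!
Thompson's construction turns `E` into a finite ε-automaton over `Σ ∪ Ω_n`. The Petri net is
the synchronized product of this automaton with the semaphore net, which has one place per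
counter `i`, on which `σᵢ` puts a token and from which `ωᵢ` takes one. A control token walks
along the edges of the automaton, and only the `Σ`-edges are visible. A firing sequence from
(initial state, empty counters) to (final state, empty counters) is then an accepting run whose
`Ω_n`-part never decrements an empty counter and ends with all counters empty, that is, whose
`h̄`-image lies in `C₀(n)`.
-/

open Computability Set

namespace εNFA

variable {α : Type*} {σ σ₁ σ₂ τ : Type*}

theorem IsPath.map {M : εNFA α σ} {N : εNFA α τ} (f : σ → τ)
    (hf : ∀ s a t, t ∈ M.step s a → f t ∈ N.step (f s) a) {s t : σ} {x : List (Option α)}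
    (h : M.IsPath s t x) : N.IsPath (f s) (f t) x := by
  induction h with
  | nil s => exact .nil _
  | cons t s u a x hst _ ih => exact .cons _ _ _ _ _ (hf _ _ _ hst) ih

theorem IsPath.exists_lift_or_exit {M : εNFA α σ} {N : εNFA α τ} {f : σ → τ}
    {Exit : σ → Option α → τ → Prop}
    (hN : ∀ s a u, u ∈ N.step (f s) a → (∃ t ∈ M.step s a, f t = u) ∨ Exit s a u)
    {s : σ} {u : τ} {x : List (Option α)} (h : N.IsPath (f s) u x) :
    (∃ t, M.IsPath s t x ∧ f t = u) ∨
      ∃ t a v x₁ x₂, x = x₁ ++ a :: x₂ ∧ M.IsPath s t x₁ ∧ Exit t a v ∧ N.IsPath v u x₂ := by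
  induction x generalizing s with
  | nil => exact .inl ⟨s, .nil s, (isPath_nil N).1 h⟩
  | cons a x ih =>
    obtain ⟨v, a, x, hv, hpath, hx⟩ := ((N.isPath_iff _ _ _).1 h).resolve_left (by simp)
    obtain ⟨rfl, rfl⟩ := List.cons_eq_cons.1 hx
    rcases hN _ _ _ hv with ⟨t, ht, rfl⟩ | hexit
    · rcases ih hpath with ⟨t', hp, hu⟩ | ⟨t', b, w, x₁, x₂, rfl, hp, hexit, hrest⟩
      · exact .inl ⟨t', .cons _ _ _ _ _ ht hp, hu⟩
      · exact .inr ⟨t', b, w, a :: x₁, x₂, rfl, .cons _ _ _ _ _ ht hp, hexit, hrest⟩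
    · exact .inr ⟨s, a, v, [], x, rfl, .nil s, hexit, hpath⟩

theorem IsPath.exists_lift {M : εNFA α σ} {N : εNFA α τ} {f : σ → τ}
    (hN : ∀ s a u, u ∈ N.step (f s) a → ∃ t ∈ M.step s a, f t = u)
    {s : σ} {u : τ} {x : List (Option α)} (h : N.IsPath (f s) u x) :
    ∃ t, M.IsPath s t x ∧ f t = u := by
  simpa using IsPath.exists_lift_or_exit (Exit := fun _ _ _ => False) (by simpa using hN) h

theorem accepts_zero : (0 : εNFA α σ).accepts = 0 := by
  ext x
  simp [mem_accepts_iff_exists_path, Language.notMem_zero]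

theorem accepts_one [Nonempty σ] : (1 : εNFA α σ).accepts = 1 := by
  ext x
  simp only [mem_accepts_iff_exists_path, start_one, accept_one, mem_univ, true_and,
    Language.mem_one]
  constructor
  · rintro ⟨s, t, x', rfl, h⟩
    cases h with
    | nil => rfl
    | cons _ _ _ _ _ h => simp at h
  · rintro rfl
    exact ⟨Classical.arbitrary σ, _, [], rfl, .nil _⟩

def char (a : α) : εNFA α Bool where
  step s b := {u | s = false ∧ b = some a ∧ u = true}
  start := {false}
  accept := {true}

theorem accepts_char (a : α) : (char a).accepts = {[a]} := by
  ext x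
  simp only [mem_accepts_iff_exists_path, char, mem_singleton_iff, exists_and_left,
    exists_eq_left]
  constructor
  · rintro ⟨x', rfl, h⟩
    rcases h with _ | ⟨t, _, _, b, x', ⟨-, rfl, rfl⟩, h⟩
    cases h with
    | nil => rfl
    | cons _ _ _ _ _ h => simp at h
  · rintro rfl
    exact ⟨[some a], rfl, .singleton _ ⟨rfl, rfl, rfl⟩⟩

def plus (M₁ : εNFA α σ₁) (M₂ : εNFA α σ₂) : εNFA α (σ₁ ⊕ σ₂) where
  step := Sum.elim (fun s a => Sum.inl '' M₁.step s a) (fun s a => Sum.inr '' M₂.step s a)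
  start := Sum.inl '' M₁.start ∪ Sum.inr '' M₂.start
  accept := Sum.inl '' M₁.accept ∪ Sum.inr '' M₂.accept

def comp (M₁ : εNFA α σ₁) (M₂ : εNFA α σ₂) : εNFA α (σ₁ ⊕ σ₂) where
  step := Sum.elim
    (fun s a => Sum.inl '' M₁.step s a ∪ {u | a = none ∧ s ∈ M₁.accept ∧ u ∈ Sum.inr '' M₂.start})
    (fun s a => Sum.inr '' M₂.step s a)
  start := Sum.inl '' M₁.start
  accept := Sum.inr '' M₂.accept

def star (M : εNFA α σ) : εNFA α (Option σ) where
  step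
    | none, a => {u | a = none ∧ u ∈ some '' M.start}
    | some s, a => some '' M.step s a ∪ {u | a = none ∧ s ∈ M.accept ∧ u = none}
  start := {none}
  accept := {none}

variable {M₁ : εNFA α σ₁} {M₂ : εNFA α σ₂}

theorem isPath_plus_inl {s : σ₁} {u : σ₁ ⊕ σ₂} {x : List (Option α)} :
    (M₁.plus M₂).IsPath (.inl s) u x ↔ ∃ t, M₁.IsPath s t x ∧ .inl t = u :=
  ⟨IsPath.exists_lift fun _ _ _ => id,
    fun ⟨_, h, hu⟩ => hu ▸ h.map _ fun _ _ _ => mem_image_of_mem _⟩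

theorem isPath_plus_inr {s : σ₂} {u : σ₁ ⊕ σ₂} {x : List (Option α)} :
    (M₁.plus M₂).IsPath (.inr s) u x ↔ ∃ t, M₂.IsPath s t x ∧ .inr t = u :=
  ⟨IsPath.exists_lift fun _ _ _ => id,
    fun ⟨_, h, hu⟩ => hu ▸ h.map _ fun _ _ _ => mem_image_of_mem _⟩

theorem accepts_plus : (M₁.plus M₂).accepts = M₁.accepts + M₂.accepts := by
  ext x
  simp only [mem_accepts_iff_exists_path, Language.mem_add, plus, mem_union, mem_image]
  constructor
  · rintro ⟨_, _, x', ⟨s, hs, rfl⟩ | ⟨s, hs, rfl⟩, ht, rfl, h⟩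
    · obtain ⟨t, hp, rfl⟩ := isPath_plus_inl.1 h
      exact .inl ⟨s, t, x', hs, by simpa using ht, rfl, hp⟩
    · obtain ⟨t, hp, rfl⟩ := isPath_plus_inr.1 h
      exact .inr ⟨s, t, x', hs, by simpa using ht, rfl, hp⟩
  · rintro (⟨s, t, x', hs, ht, rfl, h⟩ | ⟨s, t, x', hs, ht, rfl, h⟩)
    · exact ⟨_, _, x', .inl ⟨s, hs, rfl⟩, .inl ⟨t, ht, rfl⟩, rfl, isPath_plus_inl.2 ⟨t, h, rfl⟩⟩
    · exact ⟨_, _, x', .inr ⟨s, hs, rfl⟩, .inr ⟨t, ht, rfl⟩, rfl, isPath_plus_inr.2 ⟨t, h, rfl⟩⟩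

theorem isPath_comp_inr {s : σ₂} {u : σ₁ ⊕ σ₂} {x : List (Option α)} :
    (M₁.comp M₂).IsPath (.inr s) u x ↔ ∃ t, M₂.IsPath s t x ∧ .inr t = u :=
  ⟨IsPath.exists_lift fun _ _ _ => id,
    fun ⟨_, h, hu⟩ => hu ▸ h.map _ fun _ _ _ => mem_image_of_mem _⟩

theorem isPath_comp_inl_inr {s : σ₁} {u : σ₂} {x : List (Option α)} :
    (M₁.comp M₂).IsPath (.inl s) (.inr u) x ↔
      ∃ t t' x₁ x₂, x = x₁ ++ none :: x₂ ∧ M₁.IsPath s t x₁ ∧ t ∈ M₁.accept ∧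
        t' ∈ M₂.start ∧ M₂.IsPath t' u x₂ := by
  constructor
  · intro h
    rcases IsPath.exists_lift_or_exit (fun _ _ _ => id) h with ⟨_, _, hu⟩ |
      ⟨t, _, _, x₁, x₂, rfl, hp, ⟨rfl, ht, t', ht', rfl⟩, hrest⟩
    · cases hu
    · obtain ⟨_, hp', hu⟩ := isPath_comp_inr.1 hrest
      cases hu
      exact ⟨t, t', x₁, x₂, rfl, hp, ht, ht', hp'⟩
  · rintro ⟨t, t', x₁, x₂, rfl, hp, ht, ht', hp'⟩
    refine (isPath_append _).2 ⟨.inl t, hp.map (N := M₁.comp M₂) Sum.inl fun _ _ _ h =>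
      Or.inl (mem_image_of_mem _ h), ?_⟩
    exact .cons _ _ _ _ _ (Or.inr ⟨rfl, ht, t', ht', rfl⟩) (isPath_comp_inr.2 ⟨u, hp', rfl⟩)

theorem accepts_comp : (M₁.comp M₂).accepts = M₁.accepts * M₂.accepts := by
  ext x
  simp only [mem_accepts_iff_exists_path, Language.mem_mul, comp, mem_image]
  constructor
  · rintro ⟨_, _, x', ⟨s, hs, rfl⟩, ⟨u, hu, rfl⟩, rfl, h⟩
    obtain ⟨t, t', x₁, x₂, rfl, hp, ht, ht', hp'⟩ := isPath_comp_inl_inr.1 h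
    exact ⟨_, ⟨s, t, x₁, hs, ht, rfl, hp⟩, _, ⟨t', u, x₂, ht', hu, rfl, hp'⟩,
      by simp [List.reduceOption_append, List.reduceOption_cons_of_none]⟩
  · rintro ⟨_, ⟨s, t, x₁, hs, ht, rfl, hp⟩, _, ⟨t', u, x₂, ht', hu, rfl, hp'⟩, rfl⟩
    exact ⟨_, _, x₁ ++ none :: x₂, ⟨s, hs, rfl⟩, ⟨u, hu, rfl⟩,
      by simp [List.reduceOption_append, List.reduceOption_cons_of_none],
      isPath_comp_inl_inr.2 ⟨t, t', x₁, x₂, rfl, hp, ht, ht', hp'⟩⟩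

variable {M : εNFA α σ}

theorem isPath_star_some_none {s : σ} {x : List (Option α)} :
    M.star.IsPath (some s) none x ↔
      ∃ t x₁ x₂, x = x₁ ++ none :: x₂ ∧ M.IsPath s t x₁ ∧ t ∈ M.accept ∧
        M.star.IsPath none none x₂ := by
  constructor
  · intro h
    rcases IsPath.exists_lift_or_exit (fun _ _ _ => id) h with ⟨_, _, hu⟩ |
      ⟨t, _, _, x₁, x₂, rfl, hp, ⟨rfl, ht, rfl⟩, hrest⟩
    · cases hu
    · exact ⟨t, x₁, x₂, rfl, hp, ht, hrest⟩
  · rintro ⟨t, x₁, x₂, rfl, hp, ht, hrest⟩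
    refine (isPath_append _).2 ⟨some t, hp.map (N := M.star) some fun _ _ _ h =>
      Or.inl (mem_image_of_mem _ h), ?_⟩
    exact .cons _ _ _ _ _ (Or.inr ⟨rfl, ht, rfl⟩) hrest

theorem reduceOption_mem_kstar_of_isPath_star {x : List (Option α)}
    (h : M.star.IsPath none none x) : x.reduceOption ∈ M.accepts∗ := by
  induction hn : x.length using Nat.strong_induction_on generalizing x with
  | _ n ih =>
    rcases x with _ | ⟨a, x⟩
    · exact Language.nil_mem_kstar _
    obtain ⟨_, _, _, ⟨rfl, s, hs, rfl⟩, hrest, hx⟩ :=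
      ((isPath_iff _ _ _ _).1 h).resolve_left (by simp)
    obtain ⟨rfl, rfl⟩ := List.cons_eq_cons.1 hx
    obtain ⟨t, x₁, x₂, rfl, hp, ht, hrest⟩ := isPath_star_some_none.1 hrest
    have hx₁ : x₁.reduceOption ∈ M.accepts :=
      M.mem_accepts_iff_exists_path.2 ⟨s, t, x₁, hs, ht, rfl, hp⟩
    obtain ⟨L, hL, hLmem⟩ := Language.mem_kstar.1 (ih _ (by simp at hn; omega) hrest rfl)
    refine Language.mem_kstar.2 ⟨x₁.reduceOption :: L, ?_, ?_⟩
    · simp [List.reduceOption_append, List.reduceOption_cons_of_none, hL]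
    · simpa [hx₁] using hLmem

theorem accepts_star : M.star.accepts = M.accepts∗ := by
  ext x
  constructor
  · intro h
    obtain ⟨_, _, x', rfl, rfl, rfl, hp⟩ := M.star.mem_accepts_iff_exists_path.1 h
    exact reduceOption_mem_kstar_of_isPath_star hp
  · intro h
    obtain ⟨L, rfl, hL⟩ := Language.mem_kstar.1 h
    refine M.star.mem_accepts_iff_exists_path.2 ?_
    simp only [star, mem_singleton_iff, exists_and_left, exists_eq_left]
    clear h
    induction L with
    | nil => exact ⟨[], rfl, .nil _⟩
    | cons y L ih =>
      obtain ⟨s, t, y', hs, ht, rfl, hp⟩ :=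
        M.mem_accepts_iff_exists_path.1 (hL y List.mem_cons_self)
      obtain ⟨x', hx', hp'⟩ := ih fun z hz => hL z (List.mem_cons_of_mem _ hz)
      refine ⟨none :: (y' ++ none :: x'), ?_, .cons _ _ _ _ _ ⟨rfl, s, hs, rfl⟩
        (isPath_star_some_none.2 ⟨t, y', x', rfl, hp, ht, hp'⟩)⟩
      simp [List.reduceOption_append, List.reduceOption_cons_of_none, hx']

end εNFA

namespace RegularExpression

variable {α : Type*}

def State : RegularExpression α → Type
  | zero | epsilon => Unit
  | char _ => Bool
  | plus E₁ E₂ | comp E₁ E₂ => State E₁ ⊕ State E₂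
  | star E => Option (State E)

instance State.finite : (E : RegularExpression α) → Finite E.State
  | zero | epsilon => inferInstanceAs (Finite Unit)
  | char _ => inferInstanceAs (Finite Bool)
  | plus E₁ E₂ | comp E₁ E₂ =>
    have := State.finite E₁; have := State.finite E₂; inferInstanceAs (Finite (_ ⊕ _))
  | star E => have := State.finite E; inferInstanceAs (Finite (Option _))

def toεNFA : (E : RegularExpression α) → εNFA α E.State
  | zero => (0 : εNFA α Unit)
  | epsilon => (1 : εNFA α Unit)
  | char a => εNFA.char a
  | plus E₁ E₂ => E₁.toεNFA.plus E₂.toεNFA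
  | comp E₁ E₂ => E₁.toεNFA.comp E₂.toεNFA
  | star E => E.toεNFA.star

theorem accepts_toεNFA : (E : RegularExpression α) → E.toεNFA.accepts = E.matches'
  | zero => εNFA.accepts_zero
  | epsilon => εNFA.accepts_one (σ := Unit)
  | char a => εNFA.accepts_char a
  | plus E₁ E₂ => εNFA.accepts_plus.trans <| by rw [accepts_toεNFA E₁, accepts_toεNFA E₂]; rfl
  | comp E₁ E₂ => εNFA.accepts_comp.trans <| by rw [accepts_toεNFA E₁, accepts_toεNFA E₂]; rfl
  | star E => εNFA.accepts_star.trans <| by rw [accepts_toεNFA E]; rfl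

end RegularExpression

namespace LabelledPetriNet

variable {P T A : Type} {N : LabelledPetriNet P T A}

theorem firingSeq_nil_iff {M M' : P → ℕ} : N.FiringSeq M [] M' ↔ M = M' :=
  ⟨fun h => by cases h; rfl, fun h => h ▸ .nil M⟩

theorem firingSeq_cons_iff {M M' : P → ℕ} {t : T} {ts : List T} :
    N.FiringSeq M (t :: ts) M' ↔ N.Enabled M t ∧ N.FiringSeq (N.fire M t) ts M' :=
  ⟨fun h => by cases h with | cons he hs => exact ⟨he, hs⟩, fun ⟨he, hs⟩ => .cons he hs⟩

end LabelledPetriNet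

namespace εNFA

variable {A B C K Q : Type}

structure Edge (M : εNFA B Q) where
  source : Q
  letter : Option B
  target : Q
  mem_step : target ∈ M.step source letter

instance [Finite B] [Finite Q] (M : εNFA B Q) : Finite M.Edge :=
  Finite.of_injective (fun e : M.Edge => (e.source, e.letter, e.target)) <| by
    rintro ⟨⟩ ⟨⟩ h
    simp_all

/-- The synchronized product of the automaton `M` with the net `S`. -/
def productNet [DecidableEq Q] (M : εNFA B Q) (S : LabelledPetriNet K B C) (out : B → Option A) :
    LabelledPetriNet (Q ⊕ K) M.Edge A where
  pre e := Sum.elim (Pi.single e.source 1) (e.letter.elim 0 S.pre)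
  post e := Sum.elim (Pi.single e.target 1) (e.letter.elim 0 S.post)
  label e := e.letter.bind out

def productMarking [DecidableEq Q] (q : Q) (c : K → ℕ) : Q ⊕ K → ℕ :=
  Sum.elim (Pi.single q 1) c

section

variable [DecidableEq Q] {M : εNFA B Q} {S : LabelledPetriNet K B C} {out : B → Option A}

theorem productMarking_inj {q q' : Q} {c c' : K → ℕ} :
    productMarking q c = productMarking q' c' ↔ q = q' ∧ c = c' := by
  refine ⟨fun h => ⟨?_, funext fun k => congrFun h (.inr k)⟩, fun ⟨hq, hc⟩ => hq ▸ hc ▸ rfl⟩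
  have := congrFun h (.inl q)
  by_contra hne
  simp [productMarking, hne] at this

theorem enabled_productMarking_iff {q : Q} {c : K → ℕ} {e : M.Edge} :
    (M.productNet S out).Enabled (productMarking q c) e ↔
      e.source = q ∧ ∀ k, e.letter.elim 0 S.pre k ≤ c k := by
  simp only [LabelledPetriNet.Enabled, productNet, productMarking, Sum.forall, Sum.elim_inl,
    Sum.elim_inr]
  refine and_congr_left fun _ => ⟨fun h => ?_, fun h q' => h ▸ le_rfl⟩
  by_contra hne
  simpa [hne] using h e.source

theorem fire_productMarking (c : K → ℕ) (e : M.Edge) :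
    (M.productNet S out).fire (productMarking e.source c) e =
      productMarking e.target
        fun k => c k - e.letter.elim 0 S.pre k + e.letter.elim 0 S.post k := by
  funext p
  rcases p with q | k
  · simp [LabelledPetriNet.fire, productNet, productMarking]
  · rfl

theorem labelWord_productNet (es : List M.Edge) :
    (M.productNet S out).labelWord es = (es.map Edge.letter).reduceOption.filterMap out := by
  simp [LabelledPetriNet.labelWord, productNet, List.reduceOption, List.filterMap_map,
    List.filterMap_filterMap]

theorem exists_isPath_of_firingSeq {q : Q} {c : K → ℕ} {es : List M.Edge} {m : Q ⊕ K → ℕ}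
    (h : (M.productNet S out).FiringSeq (productMarking q c) es m) :
    ∃ q' c', m = productMarking q' c' ∧ M.IsPath q q' (es.map Edge.letter) ∧
      S.FiringSeq c (es.map Edge.letter).reduceOption c' := by
  induction es generalizing q c with
  | nil => exact ⟨q, c, (LabelledPetriNet.firingSeq_nil_iff.1 h).symm, .nil q, .nil c⟩
  | cons e es ih =>
    obtain ⟨he, hs⟩ := LabelledPetriNet.firingSeq_cons_iff.1 h
    obtain ⟨rfl, hpre⟩ := enabled_productMarking_iff.1 he
    rw [fire_productMarking] at hs
    obtain ⟨q', c', rfl, hp, hS⟩ := ih hs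
    refine ⟨q', c', rfl, .cons _ _ _ _ _ e.mem_step hp, ?_⟩
    rcases e with ⟨s, _ | b, t, hst⟩
    · simpa [List.reduceOption_cons_of_none] using hS
    · exact .cons hpre hS

theorem exists_firingSeq_of_isPath {q q' : Q} {x : List (Option B)} (h : M.IsPath q q' x)
    {c c' : K → ℕ} (hS : S.FiringSeq c x.reduceOption c') :
    ∃ es : List M.Edge, es.map Edge.letter = x ∧
      (M.productNet S out).FiringSeq (productMarking q c) es (productMarking q' c') := by
  induction h generalizing c with
  | nil q => exact ⟨[], rfl, (LabelledPetriNet.firingSeq_nil_iff.1 hS) ▸ .nil _⟩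
  | cons t s u a x hst _ ih =>
    let e : M.Edge := ⟨s, a, t, hst⟩
    rcases a with _ | b
    · obtain ⟨es, rfl, hes⟩ := ih (by simpa [List.reduceOption_cons_of_none] using hS)
      refine ⟨e :: es, rfl, .cons (enabled_productMarking_iff.2 ⟨rfl, by simp [e]⟩) ?_⟩
      convert hes using 1
      exact (fire_productMarking c e).trans (by simp [e])
    · obtain ⟨hb, hS⟩ := LabelledPetriNet.firingSeq_cons_iff.1 hS
      obtain ⟨es, rfl, hes⟩ := ih hS
      exact ⟨e :: es, rfl, .cons (enabled_productMarking_iff.2 ⟨rfl, hb⟩)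
        (by convert hes using 1; exact fire_productMarking c e)⟩

theorem terminalLang_productNet (q₀ q_f : Q) (c₀ c_f : K → ℕ) :
    (M.productNet S out).terminalLang (productMarking q₀ c₀) (productMarking q_f c_f) =
      {w | ∃ x, M.IsPath q₀ q_f x ∧ S.FiringSeq c₀ x.reduceOption c_f ∧
        x.reduceOption.filterMap out = w} := by
  ext w
  simp only [LabelledPetriNet.terminalLang, labelWord_productNet]
  constructor
  · rintro ⟨es, h, rfl⟩
    obtain ⟨q', c', hm, hp, hS⟩ := exists_isPath_of_firingSeq h
    obtain ⟨rfl, rfl⟩ := productMarking_inj.1 hm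
    exact ⟨_, hp, hS, rfl⟩
  · rintro ⟨x, hp, hS, rfl⟩
    obtain ⟨es, rfl, h⟩ := exists_firingSeq_of_isPath hp hS
    exact ⟨es, h, rfl⟩

end

theorem exists_terminalLang_eq_controlled_accepts [Finite B] [Finite Q] [Finite K]
    (M : εNFA B Q) (S : LabelledPetriNet K B C) (out : B → Option A) (c₀ c_f : K → ℕ) :
    ∃ (P T : Type) (_ : Fintype P) (_ : Fintype T) (N : LabelledPetriNet P T A)
      (M₀ Mf : P → ℕ),
      N.terminalLang M₀ Mf =
        {w | ∃ x ∈ M.accepts, S.FiringSeq c₀ x c_f ∧ x.filterMap out = w} := by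
  classical
  -- framing `M` by the one-state automaton of `ε` gives a single initial and final state
  let M' := (1 : εNFA B Unit).comp (M.comp (1 : εNFA B Unit))
  refine ⟨_, M'.Edge, Fintype.ofFinite _, Fintype.ofFinite _, M'.productNet S out,
    productMarking (.inl ()) c₀, productMarking (.inr (.inr ())) c_f, ?_⟩
  have hM' : M'.accepts = M.accepts := by simp [M', accepts_comp, accepts_one]
  have hs : M'.start = {.inl ()} := by ext (_ | _) <;> simp [M', comp]
  have ha : M'.accept = {.inr (.inr ())} := by ext (_ | _ | _) <;> simp [M', comp]
  rw [terminalLang_productNet, ← hM']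
  ext w
  simp only [mem_accepts_iff_exists_path, hs, ha, mem_singleton_iff]
  constructor
  · rintro ⟨x, hp, hS, rfl⟩
    exact ⟨_, ⟨_, _, x, rfl, rfl, rfl, hp⟩, hS, rfl⟩
  · rintro ⟨_, ⟨_, _, x, rfl, rfl, rfl, hp⟩, hS, rfl⟩
    exact ⟨x, hp, hS, rfl⟩

end εNFA

def semaphoreNet (A : Type) (n : ℕ) : LabelledPetriNet (Fin n) (A ⊕ Omega n) (Omega n) where
  pre x i := (eraseSigma [x]).count (i, false)
  post x i := (eraseSigma [x]).count (i, true)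
  label := Sum.getRight?

/-- `v` drives the semaphore counters from `c` to `c'` without any counter going negative. -/
def IsSemaphoreRun {n : ℕ} (c : Fin n → ℕ) (v : List (Omega n)) (c' : Fin n → ℕ) : Prop :=
  ∀ i, (∀ p, p <+: v → p.count (i, false) ≤ c i + p.count (i, true)) ∧
    c' i + v.count (i, false) = c i + v.count (i, true)

section Semaphore

variable {A : Type} {n : ℕ} {c c' : Fin n → ℕ}

theorem isSemaphoreRun_nil_iff : IsSemaphoreRun c [] c' ↔ c = c' := by
  simp [IsSemaphoreRun, funext_iff, eq_comm]

theorem isSemaphoreRun_cons_iff {u : Omega n} {v : List (Omega n)} :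
    IsSemaphoreRun c (u :: v) c' ↔ (∀ i, [u].count (i, false) ≤ c i) ∧
      IsSemaphoreRun (fun i => c i - [u].count (i, false) + [u].count (i, true)) v c' := by
  simp only [IsSemaphoreRun, List.prefix_cons_iff, ← forall_and]
  refine forall_congr' fun i => ?_
  simp only [List.count_cons, List.count_nil, zero_add]
  -- a letter is never both `σᵢ` and `ωᵢ`
  have hu : (if (u == (i, false)) = true then 1 else 0) = 0 ∨
      (if (u == (i, true)) = true then 1 else 0) = 0 := by
    obtain ⟨j, _ | _⟩ := u <;> simp
  constructor
  · rintro ⟨hpre, htot⟩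
    have h₀ := hpre [u] (.inr ⟨[], rfl, List.nil_prefix⟩)
    simp only [List.count_cons, List.count_nil, zero_add] at h₀
    refine ⟨by omega, fun p hp => ?_, by omega⟩
    have := hpre (u :: p) (.inr ⟨p, rfl, hp⟩)
    simp only [List.count_cons] at this
    omega
  · rintro ⟨h₀, hpre, htot⟩
    refine ⟨?_, by omega⟩
    rintro p (rfl | ⟨p, rfl, hp⟩)
    · simp
    · have := hpre p hp
      simp only [List.count_cons]
      omega

theorem firingSeq_semaphoreNet_iff {x : List (A ⊕ Omega n)} :
    (semaphoreNet A n).FiringSeq c x c' ↔ IsSemaphoreRun c (eraseSigma x) c' := by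
  induction x generalizing c with
  | nil => exact LabelledPetriNet.firingSeq_nil_iff.trans isSemaphoreRun_nil_iff.symm
  | cons a x ih =>
    rw [LabelledPetriNet.firingSeq_cons_iff, ih]
    rcases a with a | u
    · have hfire : (semaphoreNet A n).fire c (.inl a) = c := funext fun i => Nat.sub_zero _
      rw [hfire]
      exact ⟨fun h => h.2, fun h => ⟨fun _ => Nat.zero_le _, h⟩⟩
    · exact isSemaphoreRun_cons_iff.symm

theorem mem_C0_iff_isSemaphoreRun {v : List (Omega n)} : v ∈ C0 n ↔ IsSemaphoreRun 0 v 0 :=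
  forall_congr' fun i => by simp [eq_comm]

end Semaphore

/-- The language of every regular expression controlled by balanced ([0]-counter) semaphores
is a terminal Petri net language. -/
theorem recbs_lang_is_terminal_petri_lang {A : Type} [Fintype A] (n : ℕ)
    (E : RegularExpression (A ⊕ Omega n)) :
    ∃ (P T : Type) (_ : Fintype P) (_ : Fintype T) (N : LabelledPetriNet P T A)
      (M₀ Mf : P → ℕ),
      N.terminalLang M₀ Mf =
        { w | ∃ x ∈ E.matches', eraseOmega x = w ∧ eraseSigma x ∈ C0 n } := by
  simp_rw [mem_C0_iff_isSemaphoreRun, ← firingSeq_semaphoreNet_iff, ← E.accepts_toεNFA,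
    and_comm (a := eraseOmega _ = _)]
  exact E.toεNFA.exists_terminalLang_eq_controlled_accepts (semaphoreNet A n) Sum.getLeft? 0 0
end
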